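/- arXiv:math/0606712 — 2 statements merged into one kernel-verified Lean document; each statement's English description precedes it below -/
import Mathlib

section
/- Let p be an odd prime, e ≥ 1, n = p^e, 1 ≤ f ≤ e. In G_f, if x and y generate G_f then G_f = ⟨x⟩⟨y⟩ (every element is a product of a power of x and a power of y) and ⟨x⟩ ∩ ⟨y⟩ = 1. -/
/-- The relations for the group `G_f = ⟨g, h | g^n = h^n = 1, g⁻¹hg = h^q⟩`. -/
def fermatRels (n q : ℕ) : Set (FreeGroup (Fin 2)) :=
  {FreeGroup.of 0 ^ n, FreeGroup.of 1 ^ n,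
   (FreeGroup.of 0)⁻¹ * FreeGroup.of 1 * FreeGroup.of 0 * (FreeGroup.of 1 ^ q)⁻¹}

/-- The group `G_f` (with `n = p^e`, `q = 1 + p^f`). -/
abbrev Gf (n q : ℕ) := PresentedGroup (fermatRels n q)

/-- The generator `g` of `G_f`. -/
def gGen (n q : ℕ) : Gf n q := PresentedGroup.of 0

/-- The generator `h` of `G_f`. -/
def hGen (n q : ℕ) : Gf n q := PresentedGroup.of 1

/-!
`G_f` is the semidirect product `ℤ/n ⋊ ℤ/n` in which the generator of the acting factor
multiplies by `q`: the assignment `g ↦ (1, 0)`, `h ↦ (0, 1)` respects the relations, and every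
element of `G_f` is some `g ^ i * h ^ j`, so it is an isomorphism. In these coordinates
`(a, b) ^ k = (k a, b (1 + u + ⋯ + u ^ (k - 1)))` with `u = q ^ a ≡ 1 mod p`, and for odd `p`
the geometric sum is `≡ k mod p ^ (M + 1)` as soon as `p ^ M ∣ k`. If `x = (a, b)` and
`y = (c, d)` generate, their images generate `(ℤ/p)²`, so `a d - b c` is a unit. Then
`x ^ k = y ^ l` gives `k (a, b) ≡ l (c, d) mod p ^ (M + 1)`, hence `p ^ (M + 1) ∣ k, l`, inductively up to
`n ∣ k, l`. So `x` and `y` have order `n`, `⟨x⟩ ∩ ⟨y⟩ = 1`, and `|⟨x⟩| |⟨y⟩| = n² = |G_f|`.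
-/

open Finset

theorem geom_sum_range_mul {R : Type*} [Semiring R] (u : R) (p k : ℕ) :
    ∑ i ∈ range (p * k), u ^ i = (∑ i ∈ range k, (u ^ p) ^ i) * ∑ i ∈ range p, u ^ i := by
  induction k with
  | zero => simp
  | succ k ih =>
    rw [Nat.mul_succ, sum_range_add, ih, sum_range_succ, add_mul, ← pow_mul]
    simp only [pow_add, mul_sum]

theorem pow_succ_dvd_geom_sum_sub {R : Type*} [CommRing R] {p : ℕ} (hp : Odd p) {u : R}
    (hu : (p : R) ∣ u - 1) {M k : ℕ} (hk : p ^ M ∣ k) :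
    (p : R) ^ (M + 1) ∣ ∑ i ∈ range k, u ^ i - k := by
  induction M generalizing u k with
  | zero =>
    have : ∑ i ∈ range k, u ^ i - k = ∑ i ∈ range k, (u ^ i - 1) := by simp [sum_sub_distrib]
    rw [this, zero_add, pow_one]
    exact dvd_sum fun i _ => hu.trans (sub_one_dvd_pow_sub_one u i)
  | succ M ih =>
    obtain ⟨k, rfl⟩ : p ∣ k := (dvd_pow_self p M.succ_ne_zero).trans hk
    obtain ⟨m, rfl⟩ : p ^ M ∣ k := by
      rwa [pow_succ', Nat.mul_dvd_mul_iff_left hp.pos] at hk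
    obtain ⟨r, hr⟩ := ih (hu.trans (sub_one_dvd_pow_sub_one u p)) (dvd_mul_right _ m)
    obtain ⟨b, hb⟩ := hu
    obtain ⟨s, hs⟩ := odd_sq_dvd_geom_sum₂_sub (R := R) 1 b hp
    rw [show 1 + p * b = u by rw [← hb]; ring] at hs
    simp only [one_pow, mul_one] at hs
    rw [geom_sum_range_mul, eq_add_of_sub_eq hr, eq_add_of_sub_eq hs]
    exact ⟨r + m * s + r * p * s, by push_cast; ring⟩

theorem ZMod.dvd_of_natCast_dvd_natCast {m n k : ℕ} (hmn : m ∣ n)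
    (h : (m : ZMod n) ∣ (k : ZMod n)) : m ∣ k := by
  have := map_dvd (ZMod.castHom hmn (ZMod m)) h
  rwa [map_natCast, map_natCast, ZMod.natCast_self, zero_dvd_iff, ZMod.natCast_eq_zero_iff] at this

theorem ZMod.isUnit_of_isUnit_castHom {p e : ℕ} [NeZero (p ^ e)] (h : p ∣ p ^ e) {x : ZMod (p ^ e)}
    (hx : IsUnit (ZMod.castHom h (ZMod p) x)) : IsUnit x := by
  rw [← ZMod.natCast_zmod_val x, map_natCast, ZMod.isUnit_iff_coprime] at *
  exact hx.pow_right e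

section PrimePower

variable {p e : ℕ}

theorem ZMod.geom_sum_eq_zero_of_dvd_sub_one (hp : Odd p) {u : ZMod (p ^ e)}
    (hu : (p : ZMod (p ^ e)) ∣ u - 1) : ∑ i ∈ range (p ^ e), u ^ i = 0 := by
  obtain ⟨r, hr⟩ := pow_succ_dvd_geom_sum_sub hp hu (dvd_refl (p ^ e))
  have hpe : (p : ZMod (p ^ e)) ^ e = 0 := by exact_mod_cast ZMod.natCast_self (p ^ e)
  rw [eq_add_of_sub_eq hr, pow_succ, hpe]
  simp

theorem ZMod.pow_eq_one_of_dvd_sub_one (hp : Odd p) {u : ZMod (p ^ e)}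
    (hu : (p : ZMod (p ^ e)) ∣ u - 1) : u ^ p ^ e = 1 := by
  rw [← sub_eq_zero, ← geom_sum_mul, ZMod.geom_sum_eq_zero_of_dvd_sub_one hp hu, zero_mul]

end PrimePower

def ZMod.powHom {M : Type*} [Monoid M] {n : ℕ} [NeZero n] (u : M) (hu : u ^ n = 1) :
    Multiplicative (ZMod n) →* M where
  toFun j := u ^ j.toAdd.val
  map_one' := by simp
  map_mul' i j := by rw [toAdd_mul, ZMod.val_add, ← pow_eq_pow_mod _ hu, pow_add]

theorem ZMod.powHom_ofAdd_one {M : Type*} [Monoid M] {n : ℕ} [NeZero n] {u : M}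
    (hu : u ^ n = 1) : ZMod.powHom u hu (.ofAdd 1) = u := by
  simp [ZMod.powHom, ZMod.val_one_eq_one_mod, ← pow_eq_pow_mod _ hu]

theorem isUnit_mul_sub_mul_of_forall_eq_zsmul_add_zsmul {R : Type*} [CommRing R] {a b c d : R}
    (h : ∀ z : R × R, ∃ s t : ℤ, s • (a, b) + t • (c, d) = z) : IsUnit (a * d - b * c) := by
  obtain ⟨s, t, h₁⟩ := h (1, 0)
  obtain ⟨s', t', h₂⟩ := h (0, 1)
  simp only [Prod.smul_mk, Prod.mk_add_mk, Prod.mk.injEq, zsmul_eq_mul] at h₁ h₂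
  refine IsUnit.of_mul_eq_one (s * t' - s' * t) ?_
  linear_combination (s' * b + t' * d) * h₁.1 + h₂.2 - (s * b + t * d) * h₂.1

theorem Subgroup.isComplement'_zpowers_of_pow_eq_pow {G : Type*} [Group G] [Finite G]
    {x y : G} {n : ℕ} (hcard : Nat.card G = n * n) (hx : x ^ n = 1) (hy : y ^ n = 1)
    (h : ∀ k l : ℕ, x ^ k = y ^ l → n ∣ k ∧ n ∣ l) :
    (Subgroup.zpowers x).IsComplement' (Subgroup.zpowers y) := by
  have hox : orderOf x = n :=
    (orderOf_dvd_of_pow_eq_one hx).antisymm (h _ 0 (by rw [pow_orderOf_eq_one, pow_zero])).1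
  have hoy : orderOf y = n :=
    (orderOf_dvd_of_pow_eq_one hy).antisymm (h 0 _ (by rw [pow_orderOf_eq_one, pow_zero])).2
  refine Subgroup.isComplement'_of_card_mul_and_disjoint
    (by rw [Nat.card_zpowers, Nat.card_zpowers, hox, hoy, hcard]) (Subgroup.disjoint_def.mpr ?_)
  intro w hwx hwy
  obtain ⟨k, rfl⟩ := (Submonoid.mem_powers_iff _ _).mp (mem_powers_iff_mem_zpowers.mpr hwx)
  obtain ⟨l, hl⟩ := (Submonoid.mem_powers_iff _ _).mp (mem_powers_iff_mem_zpowers.mpr hwy)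
  obtain ⟨⟨m, rfl⟩, -⟩ := h k l hl.symm
  rw [pow_mul, hx, one_pow]

/-- The semidirect product `R ⋊ A`, with `A` acting on `R` by multiplication through `ρ`. -/
@[ext]
structure Metacyclic {A R : Type*} [AddCommGroup A] [CommRing R] (ρ : Multiplicative A →* R) where
  fst : A
  snd : R

namespace Metacyclic

section Group

variable {A R : Type*} [AddCommGroup A] [CommRing R] {ρ : Multiplicative A →* R}

instance : Mul (Metacyclic ρ) := ⟨fun x y => ⟨x.fst + y.fst, x.snd * ρ (.ofAdd y.fst) + y.snd⟩⟩

instance : One (Metacyclic ρ) := ⟨⟨0, 0⟩⟩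

instance : Inv (Metacyclic ρ) := ⟨fun x => ⟨-x.fst, -x.snd * ρ (.ofAdd (-x.fst))⟩⟩

@[simp]
theorem mk_mul_mk (i j : A) (b c : R) :
    (⟨i, b⟩ : Metacyclic ρ) * ⟨j, c⟩ = ⟨i + j, b * ρ (.ofAdd j) + c⟩ := rfl

@[simp]
theorem one_def : (1 : Metacyclic ρ) = ⟨0, 0⟩ := rfl

@[simp]
theorem inv_mk (i : A) (b : R) : (⟨i, b⟩ : Metacyclic ρ)⁻¹ = ⟨-i, -b * ρ (.ofAdd (-i))⟩ := rfl

instance : Group (Metacyclic ρ) :=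
  Group.ofLeftAxioms
    (fun ⟨_, _⟩ ⟨_, _⟩ ⟨_, _⟩ => by ext <;> simp [ofAdd_add, add_assoc]; ring)
    (fun ⟨_, _⟩ => by simp)
    (fun ⟨i, b⟩ => by
      have : ρ (.ofAdd (-i)) * ρ (.ofAdd i) = 1 := by
        rw [← map_mul, ← ofAdd_add, neg_add_cancel, ofAdd_zero, map_one]
      simp only [inv_mk, mk_mul_mk, one_def, neg_add_cancel, mk.injEq, true_and]
      linear_combination -b * this)

theorem mk_pow (i : A) (b : R) (k : ℕ) :
    (⟨i, b⟩ : Metacyclic ρ) ^ k = ⟨k • i, b * ∑ m ∈ range k, ρ (.ofAdd i) ^ m⟩ := by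
  induction k with
  | zero => simp
  | succ k ih => ext <;> simp [pow_succ, ih, succ_nsmul, geom_sum_succ]; ring

def equivProd : Metacyclic ρ ≃ A × R where
  toFun x := (x.fst, x.snd)
  invFun z := ⟨z.1, z.2⟩

instance [Finite A] [Finite R] : Finite (Metacyclic ρ) := .of_equiv _ equivProd.symm

theorem card : Nat.card (Metacyclic ρ) = Nat.card A * Nat.card R := by
  rw [Nat.card_congr equivProd, Nat.card_prod]

variable {B S : Type*} [AddCommGroup B] [CommRing S]

def toMultiplicativeProd (α : A →+ B) (φ : R →+* S) (hφ : ∀ i, φ (ρ i) = 1) :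
    Metacyclic ρ →* Multiplicative (B × S) where
  toFun x := .ofAdd (α x.fst, φ x.snd)
  map_one' := by simp
  map_mul' := fun ⟨_, _⟩ ⟨_, _⟩ => by simp [hφ, ← ofAdd_add]

theorem toMultiplicativeProd_surjective {α : A →+ B} {φ : R →+* S} (hφ : ∀ i, φ (ρ i) = 1)
    (hα : Function.Surjective α) (hφ' : Function.Surjective φ) :
    Function.Surjective (toMultiplicativeProd α φ hφ) := fun z => by
  obtain ⟨i, hi⟩ := hα z.toAdd.1
  obtain ⟨b, hb⟩ := hφ' z.toAdd.2
  exact ⟨⟨i, b⟩, by simp [toMultiplicativeProd, hi, hb]⟩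

end Group

section CommRing

variable {R : Type*} [CommRing R] {ρ : Multiplicative R →* R} {p : ℕ}

theorem pow_succ_dvd_of_mk_pow_eq_mk_pow (hp : Odd p) (hρ : ∀ i, (p : R) ∣ ρ i - 1)
    {a b c d : R} (hdet : IsUnit (a * d - b * c)) {M k l : ℕ} (hk : p ^ M ∣ k) (hl : p ^ M ∣ l)
    (h : (⟨a, b⟩ : Metacyclic ρ) ^ k = ⟨c, d⟩ ^ l) :
    (p : R) ^ (M + 1) ∣ k ∧ (p : R) ^ (M + 1) ∣ l := by
  rw [mk_pow, mk_pow, mk.injEq, nsmul_eq_mul, nsmul_eq_mul] at h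
  obtain ⟨h₁, h₂⟩ := h
  obtain ⟨r, hr⟩ := pow_succ_dvd_geom_sum_sub hp (hρ (.ofAdd a)) hk
  obtain ⟨s, hs⟩ := pow_succ_dvd_geom_sum_sub hp (hρ (.ofAdd c)) hl
  rw [eq_add_of_sub_eq hr, eq_add_of_sub_eq hs] at h₂
  constructor
  · rw [← hdet.dvd_mul_right]
    exact ⟨c * (b * r - d * s), by linear_combination d * h₁ - c * h₂⟩
  · rw [← hdet.dvd_mul_right]
    exact ⟨a * (b * r - d * s), by linear_combination b * h₁ - a * h₂⟩

end CommRing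

variable {p e : ℕ} {ρ : Multiplicative (ZMod (p ^ e)) →* ZMod (p ^ e)}

theorem pow_eq_one (hp : Odd p) (hρ : ∀ i, (p : ZMod (p ^ e)) ∣ ρ i - 1) (x : Metacyclic ρ) :
    x ^ p ^ e = 1 := by
  rw [mk_pow, ZMod.geom_sum_eq_zero_of_dvd_sub_one hp (hρ _), nsmul_eq_mul, ZMod.natCast_self]
  simp

theorem dvd_of_mk_pow_eq_mk_pow (hp : Odd p) (hρ : ∀ i, (p : ZMod (p ^ e)) ∣ ρ i - 1)
    {a b c d : ZMod (p ^ e)} (hdet : IsUnit (a * d - b * c)) {k l : ℕ}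
    (h : (⟨a, b⟩ : Metacyclic ρ) ^ k = ⟨c, d⟩ ^ l) : p ^ e ∣ k ∧ p ^ e ∣ l := by
  suffices ∀ M ≤ e, p ^ M ∣ k ∧ p ^ M ∣ l from this e le_rfl
  intro M hM
  induction M with
  | zero => simp
  | succ M ih =>
    obtain ⟨hk, hl⟩ := ih (by omega)
    obtain ⟨hk', hl'⟩ := pow_succ_dvd_of_mk_pow_eq_mk_pow hp hρ hdet hk hl h
    have hdvd : p ^ (M + 1) ∣ p ^ e := pow_dvd_pow p hM
    exact ⟨ZMod.dvd_of_natCast_dvd_natCast hdvd (by exact_mod_cast hk'),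
      ZMod.dvd_of_natCast_dvd_natCast hdvd (by exact_mod_cast hl')⟩

theorem isUnit_det_of_closure_eq_top [NeZero (p ^ e)] (he : 1 ≤ e)
    (hρ : ∀ i, (p : ZMod (p ^ e)) ∣ ρ i - 1) {a b c d : ZMod (p ^ e)}
    (h : Subgroup.closure {(⟨a, b⟩ : Metacyclic ρ), ⟨c, d⟩} = ⊤) : IsUnit (a * d - b * c) := by
  have hpe : p ∣ p ^ e := dvd_pow_self p (by omega)
  set φ := ZMod.castHom hpe (ZMod p)
  have hφρ : ∀ i, φ (ρ i) = 1 := fun i => by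
    obtain ⟨w, hw⟩ := hρ i
    rw [← sub_eq_zero, ← map_one φ, ← map_sub, hw, map_mul, map_natCast, ZMod.natCast_self,
      zero_mul]
  set θ := toMultiplicativeProd φ.toAddMonoidHom φ hφρ
  have hθ : Function.Surjective θ :=
    toMultiplicativeProd_surjective hφρ (ZMod.castHom_surjective hpe) (ZMod.castHom_surjective hpe)
  have hgen : Subgroup.closure {θ ⟨a, b⟩, θ ⟨c, d⟩} = ⊤ := by
    rw [← Set.image_pair, ← MonoidHom.map_closure, h, Subgroup.map_top_of_surjective _ hθ]
  refine ZMod.isUnit_of_isUnit_castHom hpe ?_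
  rw [map_sub, map_mul, map_mul]
  refine isUnit_mul_sub_mul_of_forall_eq_zsmul_add_zsmul fun z => ?_
  obtain ⟨s, t, hst⟩ :=
    Subgroup.mem_closure_pair.mp (hgen ▸ Subgroup.mem_top (Multiplicative.ofAdd z))
  exact ⟨s, t, congrArg Multiplicative.toAdd hst⟩

theorem dvd_of_pow_eq_pow [NeZero (p ^ e)] (hp : Odd p) (he : 1 ≤ e)
    (hρ : ∀ i, (p : ZMod (p ^ e)) ∣ ρ i - 1) {x y : Metacyclic ρ}
    (hgen : Subgroup.closure {x, y} = ⊤) {k l : ℕ} (h : x ^ k = y ^ l) : p ^ e ∣ k ∧ p ^ e ∣ l :=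
  dvd_of_mk_pow_eq_mk_pow hp hρ (isUnit_det_of_closure_eq_top he hρ hgen) h

end Metacyclic

namespace Gf

variable {n q : ℕ}

theorem gGen_pow_eq_one : gGen n q ^ n = 1 :=
  (map_pow _ _ _).symm.trans (PresentedGroup.one_of_mem (by simp [fermatRels]))

theorem hGen_pow_eq_one : hGen n q ^ n = 1 :=
  (map_pow _ _ _).symm.trans (PresentedGroup.one_of_mem (by simp [fermatRels]))

theorem gGen_inv_mul_hGen_mul_gGen : (gGen n q)⁻¹ * hGen n q * gGen n q = hGen n q ^ q := by
  have := PresentedGroup.mk_eq_mk_of_mul_inv_mem (rels := fermatRels n q)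
    (x := (FreeGroup.of 0)⁻¹ * FreeGroup.of 1 * FreeGroup.of 0) (y := FreeGroup.of 1 ^ q)
    (by simp [fermatRels])
  rwa [map_mul, map_mul, map_inv, map_pow] at this

theorem hGen_pow_mul_gGen_pow (j m : ℕ) :
    hGen n q ^ j * gGen n q ^ m = gGen n q ^ m * hGen n q ^ (j * q ^ m) := by
  have hg : ∀ j : ℕ, hGen n q ^ j * gGen n q = gGen n q * hGen n q ^ (j * q) := fun j => by
    have : (gGen n q)⁻¹ * hGen n q ^ j * gGen n q = ((gGen n q)⁻¹ * hGen n q * gGen n q) ^ j := by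
      simpa using (conj_pow (a := (gGen n q)⁻¹) (b := hGen n q) (i := j)).symm
    rw [pow_mul', ← gGen_inv_mul_hGen_mul_gGen, ← this]
    group
  induction m generalizing j with
  | zero => simp
  | succ m ih =>
    rw [pow_succ, ← mul_assoc, ih, mul_assoc, hg, ← mul_assoc, pow_succ q, mul_assoc j]

theorem exists_eq_gGen_pow_mul_hGen_pow [NeZero n] (z : Gf n q) :
    ∃ i j : ℕ, z = gGen n q ^ i * hGen n q ^ j := by
  have hmul : ∀ (i j : ℕ) (a : Fin 2) (m : ℕ), ∃ i' j' : ℕ,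
      gGen n q ^ i * hGen n q ^ j * PresentedGroup.of a ^ m = gGen n q ^ i' * hGen n q ^ j' := by
    intro i j a m
    fin_cases a
    · refine ⟨i + m, j * q ^ m, ?_⟩
      change _ * gGen n q ^ m = _
      rw [mul_assoc, hGen_pow_mul_gGen_pow, ← mul_assoc, pow_add]
    · refine ⟨i, j + m, ?_⟩
      change _ * hGen n q ^ m = _
      rw [mul_assoc, pow_add]
  have hinv : ∀ a : Fin 2, (PresentedGroup.of a : Gf n q)⁻¹ = PresentedGroup.of a ^ (n - 1) := by
    intro a
    refine inv_eq_of_mul_eq_one_right ?_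
    rw [← pow_succ', Nat.sub_add_cancel NeZero.one_le]
    fin_cases a
    exacts [gGen_pow_eq_one, hGen_pow_eq_one]
  have hz : z ∈ Subgroup.closure (Set.range PresentedGroup.of) := by
    rw [PresentedGroup.closure_range_of]; trivial
  induction hz using Subgroup.closure_induction_right with
  | one => exact ⟨0, 0, by simp⟩
  | mul_right w _ s hs ih =>
    obtain ⟨a, rfl⟩ := hs
    obtain ⟨i, j, rfl⟩ := ih
    simpa using hmul i j a 1
  | mul_inv_cancel w _ s hs ih =>
    obtain ⟨a, rfl⟩ := hs
    obtain ⟨i, j, rfl⟩ := ih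
    rw [hinv]
    exact hmul i j a (n - 1)

variable [NeZero n] (hq : (q : ZMod n) ^ n = 1)

def toMetacyclic : Gf n q →* Metacyclic (ZMod.powHom (q : ZMod n) hq) :=
  PresentedGroup.toGroup (f := ![⟨1, 0⟩, ⟨0, 1⟩]) <| by
    rintro r (rfl | rfl | rfl) <;> simp [Metacyclic.mk_pow, ZMod.powHom_ofAdd_one]

theorem toMetacyclic_gGen_pow_mul_hGen_pow (i j : ℕ) :
    toMetacyclic hq (gGen n q ^ i * hGen n q ^ j) = ⟨i, j⟩ := by
  simp [toMetacyclic, gGen, hGen, PresentedGroup.toGroup.of, Metacyclic.mk_pow]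

theorem toMetacyclic_bijective : Function.Bijective (toMetacyclic hq) := by
  refine ⟨(injective_iff_map_eq_one _).mpr fun z hz => ?_, fun ⟨i, b⟩ =>
    ⟨gGen n q ^ i.val * hGen n q ^ b.val, by simp [toMetacyclic_gGen_pow_mul_hGen_pow]⟩⟩
  obtain ⟨i, j, rfl⟩ := exists_eq_gGen_pow_mul_hGen_pow z
  rw [toMetacyclic_gGen_pow_mul_hGen_pow, Metacyclic.one_def, Metacyclic.mk.injEq,
    ZMod.natCast_eq_zero_iff, ZMod.natCast_eq_zero_iff] at hz
  obtain ⟨⟨i, rfl⟩, ⟨j, rfl⟩⟩ := hz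
  simp [pow_mul, gGen_pow_eq_one, hGen_pow_eq_one]

end Gf

theorem stmt15_general (p e f : ℕ) (hodd : Odd p) (he : 1 ≤ e)
    (hf1 : 1 ≤ f) (n : ℕ) (hn : n = p ^ e) (q : ℕ) (hq : q = 1 + p ^ f)
    (x y : Gf n q) (hgen : Subgroup.closure {x, y} = ⊤) :
    (∀ z : Gf n q, ∃ a b : ℤ, z = x ^ a * y ^ b) ∧
    Subgroup.zpowers x ⊓ Subgroup.zpowers y = ⊥ := by
  subst hn hq
  have : NeZero (p ^ e) := ⟨pow_ne_zero e hodd.pos.ne'⟩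
  have hq₁ : (p : ZMod (p ^ e)) ∣ ((1 + p ^ f : ℕ) : ZMod (p ^ e)) - 1 :=
    ⟨p ^ (f - 1), by push_cast; rw [← pow_succ', Nat.sub_add_cancel hf1]; ring⟩
  have hqn := ZMod.pow_eq_one_of_dvd_sub_one hodd hq₁
  have hρ : ∀ j, (p : ZMod (p ^ e)) ∣ ZMod.powHom _ hqn j - 1 :=
    fun j => hq₁.trans (sub_one_dvd_pow_sub_one _ _)
  set π := Gf.toMetacyclic hqn
  have hπ := Gf.toMetacyclic_bijective hqn
  have hgen' : Subgroup.closure {π x, π y} = ⊤ := by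
    rw [← Set.image_pair, ← MonoidHom.map_closure, hgen, Subgroup.map_top_of_surjective _ hπ.2]
  have : Finite (Gf (p ^ e) (1 + p ^ f)) := .of_injective π hπ.1
  have hc : (Subgroup.zpowers x).IsComplement' (Subgroup.zpowers y) :=
    Subgroup.isComplement'_zpowers_of_pow_eq_pow
      (by rw [Nat.card_eq_of_bijective π hπ, Metacyclic.card, Nat.card_zmod])
      (hπ.1 (by rw [map_pow, map_one, Metacyclic.pow_eq_one hodd hρ]))
      (hπ.1 (by rw [map_pow, map_one, Metacyclic.pow_eq_one hodd hρ]))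
      (fun k l hkl => Metacyclic.dvd_of_pow_eq_pow hodd he hρ hgen' (by simp only [← map_pow, hkl]))
  refine ⟨fun z => ?_, disjoint_iff.mp hc.disjoint⟩
  obtain ⟨⟨⟨_, a, rfl⟩, ⟨_, b, rfl⟩⟩, hz⟩ := hc.2 z
  exact ⟨a, b, hz.symm⟩

theorem stmt15 (p e f : ℕ) (hp : p.Prime) (hodd : Odd p) (he : 1 ≤ e)
    (hf1 : 1 ≤ f) (hfe : f ≤ e) (n : ℕ) (hn : n = p ^ e) (q : ℕ) (hq : q = 1 + p ^ f)
    (x y : Gf n q) (hgen : Subgroup.closure {x, y} = ⊤) :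
    (∀ z : Gf n q, ∃ a b : ℤ, z = x ^ a * y ^ b) ∧
    Subgroup.zpowers x ⊓ Subgroup.zpowers y = ⊥ :=
  stmt15_general p e f hodd he hf1 n hn q hq x y hgen
end

section
/- Let p be an odd prime, e ≥ 1, n = p^e, and 1 ≤ f₁ < f₂ ≤ e. Then the groups G_{f₁} = ⟨g, h | g^n = h^n = 1, g⁻¹hg = h^(1+p^{f₁})⟩ and G_{f₂} = ⟨g, h | g^n = h^n = 1, g⁻¹hg = h^(1+p^{f₂})⟩ are not isomorphic. In particular, G_e ≅ C_n × C_n and G_f is nonabelian for f < e. -/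
/-!
Homomorphisms from `G_f` to an abelian group `A` of exponent dividing `n` are exactly the pairs
`(a, b)` with `b ^ p^f = 1`, so for `A = ℤ/p^f₂` there are fewer of them from `G_f₁` than from
`G_f₂`. For `f = e` the conjugation relation says that `g` and `h` commute, which yields
`C_n × C_n`. For `f < e`, since `(1 + p^f)^(p^e) ≡ 1 mod p^e`, the group `G_f` acts on `ℤ/n` with
`g` multiplying by `(1 + p^f)⁻¹` and `h` translating by `1`, and these two maps do not commute.
-/

open Multiplicative

namespace ZMod

variable {m k : ℕ}

theorem multiplicative_pow_eq_one_of_dvd (x : Multiplicative (ZMod m)) (h : m ∣ k) :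
    x ^ k = 1 := by
  rw [← ofAdd_toAdd x, ← ofAdd_nsmul, nsmul_eq_mul, (natCast_eq_zero_iff k m).2 h, zero_mul,
    ofAdd_zero]

theorem multiplicative_prod_pow_self (x : Multiplicative (ZMod m) × Multiplicative (ZMod m)) :
    x ^ m = 1 :=
  Prod.ext (multiplicative_pow_eq_one_of_dvd _ dvd_rfl) (multiplicative_pow_eq_one_of_dvd _ dvd_rfl)

theorem ofAdd_one_pow_eq_one_iff : ofAdd (1 : ZMod m) ^ k = 1 ↔ m ∣ k := by
  rw [← ofAdd_nsmul, nsmul_one, ofAdd_eq_one, natCast_eq_zero_iff]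

theorem one_add_pow_eq_one_of_dvd {p e : ℕ} {x : ZMod (p ^ e)} (hx : (p : ZMod (p ^ e)) ∣ x) :
    (1 + x) ^ p ^ e = 1 := by
  have h := dvd_sub_pow_of_dvd_sub (p := p) (a := 1 + x) (b := 1) (by rwa [add_sub_cancel_left]) e
  rwa [one_pow, ← Nat.cast_pow, (natCast_eq_zero_iff _ _).2 (pow_dvd_pow p e.le_succ),
    zero_dvd_iff, sub_eq_zero] at h

variable {G : Type*} [Group G] {n : ℕ}

def powHom_s16 (g : G) (hg : g ^ n = 1) : Multiplicative (ZMod n) →* G :=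
  AddMonoidHom.toMultiplicativeLeft <|
    ZMod.lift n ⟨zmultiplesHom (Additive G) (Additive.ofMul g), by simp [← ofMul_pow, hg]⟩

theorem powHom_ofAdd_intCast (g : G) (hg : g ^ n = 1) (i : ℤ) :
    powHom_s16 g hg (ofAdd (i : ZMod n)) = g ^ i := by
  simp [powHom_s16]

theorem powHom_ofAdd_one_s16 (g : G) (hg : g ^ n = 1) : powHom_s16 g hg (ofAdd 1) = g := by
  simpa using powHom_ofAdd_intCast g hg 1

theorem commute_powHom {g h : G} (hg : g ^ n = 1) (hh : h ^ n = 1) (hgh : Commute g h)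
    (x y : Multiplicative (ZMod n)) : Commute (powHom_s16 g hg x) (powHom_s16 h hh y) := by
  obtain ⟨i, hi⟩ := intCast_surjective (toAdd x)
  obtain ⟨j, hj⟩ := intCast_surjective (toAdd y)
  rw [← ofAdd_toAdd x, ← ofAdd_toAdd y, ← hi, ← hj, powHom_ofAdd_intCast, powHom_ofAdd_intCast]
  exact hgh.zpow_zpow i j

theorem monoidHom_ext {φ ψ : Multiplicative (ZMod n) →* G}
    (h : φ (ofAdd 1) = ψ (ofAdd 1)) : φ = ψ := by
  refine MonoidHom.ext fun x => ?_
  obtain ⟨i, hi⟩ := intCast_surjective (toAdd x)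
  rw [← ofAdd_toAdd x, ← hi, ← zsmul_one, ofAdd_zsmul, map_zpow, map_zpow, h]

end ZMod

theorem inv_mul_mul_eq_pow_one_add_iff {A : Type*} [CommGroup A] (a b : A) (k : ℕ) :
    a⁻¹ * b * a = b ^ (1 + k) ↔ b ^ k = 1 := by
  rw [mul_comm a⁻¹, inv_mul_cancel_right, pow_add, pow_one, left_eq_mul]

theorem gGen_pow_self (n q : ℕ) : gGen n q ^ n = 1 := by
  simpa [gGen, PresentedGroup.of] using
    PresentedGroup.one_of_mem (rels := fermatRels n q) (x := FreeGroup.of 0 ^ n)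
      (by simp [fermatRels])

theorem hGen_pow_self (n q : ℕ) : hGen n q ^ n = 1 := by
  simpa [hGen, PresentedGroup.of] using
    PresentedGroup.one_of_mem (rels := fermatRels n q) (x := FreeGroup.of 1 ^ n)
      (by simp [fermatRels])

theorem inv_gGen_mul_hGen_mul_gGen (n q : ℕ) :
    (gGen n q)⁻¹ * hGen n q * gGen n q = hGen n q ^ q := by
  have := PresentedGroup.one_of_mem (rels := fermatRels n q)
    (x := (FreeGroup.of 0)⁻¹ * FreeGroup.of 1 * FreeGroup.of 0 * (FreeGroup.of 1 ^ q)⁻¹)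
    (by simp [fermatRels])
  simpa [gGen, hGen, PresentedGroup.of, mul_inv_eq_one] using this

namespace Gf

section UniversalProperty

variable {n q : ℕ} {G : Type*} [Group G]

def lift (a b : G) (ha : a ^ n = 1) (hb : b ^ n = 1) (hab : a⁻¹ * b * a = b ^ q) :
    Gf n q →* G :=
  PresentedGroup.toGroup (f := ![a, b]) <| by simp [fermatRels, ha, hb, hab]

variable {a b : G} {ha : a ^ n = 1} {hb : b ^ n = 1} {hab : a⁻¹ * b * a = b ^ q}

@[simp] theorem lift_gGen : lift a b ha hb hab (gGen n q) = a :=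
  PresentedGroup.toGroup.of _

@[simp] theorem lift_hGen : lift a b ha hb hab (hGen n q) = b :=
  PresentedGroup.toGroup.of _

theorem hom_ext {φ ψ : Gf n q →* G} (hg : φ (gGen n q) = ψ (gGen n q))
    (hh : φ (hGen n q) = ψ (hGen n q)) : φ = ψ :=
  PresentedGroup.ext fun i => by fin_cases i <;> assumption

variable (n q G) in
def homEquiv :
    (Gf n q →* G) ≃ {x : G × G // x.1 ^ n = 1 ∧ x.2 ^ n = 1 ∧ x.1⁻¹ * x.2 * x.1 = x.2 ^ q} where
  toFun φ := ⟨(φ (gGen n q), φ (hGen n q)), by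
    simp only [← map_pow, ← map_inv, ← map_mul, gGen_pow_self, hGen_pow_self,
      inv_gGen_mul_hGen_mul_gGen, map_one, and_self]⟩
  invFun x := lift x.1.1 x.1.2 x.2.1 x.2.2.1 x.2.2.2
  left_inv _ := hom_ext lift_gGen lift_hGen
  right_inv _ := by simp

end UniversalProperty

theorem card_monoidHom {A : Type*} [CommGroup A] {n : ℕ} (k : ℕ) (hA : ∀ a : A, a ^ n = 1) :
    Nat.card (Gf n (1 + k) →* A) = Nat.card A * Nat.card {b : A // b ^ k = 1} := by
  rw [← Nat.card_prod, Nat.card_congr (homEquiv n (1 + k) A)]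
  exact Nat.card_congr
    { toFun x := (x.1.1, ⟨x.1.2, (inv_mul_mul_eq_pow_one_add_iff _ _ _).1 x.2.2.2⟩)
      invFun y := ⟨(y.1, y.2.1), hA _, hA _, (inv_mul_mul_eq_pow_one_add_iff _ _ _).2 y.2.2⟩ }

theorem isEmpty_mulEquiv {n m k₁ k₂ : ℕ} [NeZero m] (hmn : m ∣ n) (hk₁ : ¬ m ∣ k₁)
    (hk₂ : m ∣ k₂) : IsEmpty (Gf n (1 + k₁) ≃* Gf n (1 + k₂)) := by
  refine ⟨fun E => ?_⟩
  have hA (a : Multiplicative (ZMod m)) : a ^ n = 1 := ZMod.multiplicative_pow_eq_one_of_dvd a hmn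
  have hcard := Nat.card_congr (E.monoidHomCongrLeftEquiv (N := Multiplicative (ZMod m)))
  rw [card_monoidHom k₁ hA, card_monoidHom k₂ hA, Nat.card_congr
    (Equiv.subtypeUnivEquiv fun b => ZMod.multiplicative_pow_eq_one_of_dvd b hk₂)] at hcard
  have hlt : Nat.card {b : Multiplicative (ZMod m) // b ^ k₁ = 1} <
      Nat.card (Multiplicative (ZMod m)) :=
    Finite.card_subtype_lt (x := ofAdd 1) (by rwa [ZMod.ofAdd_one_pow_eq_one_iff])
  have := Nat.eq_of_mul_eq_mul_left Nat.card_pos hcard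
  omega

section Abelian

variable {n k : ℕ}

theorem commute_gGen_hGen (hk : n ∣ k) : Commute (gGen n (1 + k)) (hGen n (1 + k)) := by
  have hhk : hGen n (1 + k) ^ k = 1 := by
    obtain ⟨c, rfl⟩ := hk
    rw [pow_mul, hGen_pow_self, one_pow]
  have := inv_gGen_mul_hGen_mul_gGen n (1 + k)
  rw [pow_add, pow_one, hhk, mul_one, mul_assoc, inv_mul_eq_iff_eq_mul] at this
  exact this.symm

def toProd (hk : n ∣ k) : Gf n (1 + k) →* Multiplicative (ZMod n) × Multiplicative (ZMod n) :=
  lift (ofAdd 1, 1) (1, ofAdd 1) (ZMod.multiplicative_prod_pow_self _)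
    (ZMod.multiplicative_prod_pow_self _) <|
    (inv_mul_mul_eq_pow_one_add_iff _ _ _).2 <| by
      obtain ⟨c, rfl⟩ := hk
      rw [pow_mul, ZMod.multiplicative_prod_pow_self, one_pow]

def ofProd (hk : n ∣ k) : Multiplicative (ZMod n) × Multiplicative (ZMod n) →* Gf n (1 + k) :=
  (ZMod.powHom_s16 _ (gGen_pow_self n _)).noncommCoprod (ZMod.powHom_s16 _ (hGen_pow_self n _))
    (ZMod.commute_powHom _ _ (commute_gGen_hGen hk))

theorem ofProd_comp_toProd (hk : n ∣ k) : (ofProd hk).comp (toProd hk) = MonoidHom.id _ :=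
  hom_ext (by simp [toProd, ofProd, ZMod.powHom_ofAdd_one_s16])
    (by simp [toProd, ofProd, ZMod.powHom_ofAdd_one_s16])

theorem toProd_comp_ofProd (hk : n ∣ k) : (toProd hk).comp (ofProd hk) = MonoidHom.id _ := by
  have hinl : (toProd hk).comp (ZMod.powHom_s16 _ (gGen_pow_self n _)) = MonoidHom.inl _ _ :=
    ZMod.monoidHom_ext (by simp [toProd, ZMod.powHom_ofAdd_one_s16])
  have hinr : (toProd hk).comp (ZMod.powHom_s16 _ (hGen_pow_self n _)) = MonoidHom.inr _ _ :=
    ZMod.monoidHom_ext (by simp [toProd, ZMod.powHom_ofAdd_one_s16])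
  refine MonoidHom.ext fun x => ?_
  simp only [ofProd, MonoidHom.comp_apply, MonoidHom.noncommCoprod_apply, map_mul]
  rw [← MonoidHom.comp_apply, hinl, ← MonoidHom.comp_apply, hinr]
  exact Prod.fst_mul_snd x

def mulEquivProdOfDvd (hk : n ∣ k) :
    Gf n (1 + k) ≃* Multiplicative (ZMod n) × Multiplicative (ZMod n) :=
  (toProd hk).toMulEquiv (ofProd hk) (ofProd_comp_toProd hk) (toProd_comp_ofProd hk)

end Abelian

theorem not_commutative {n q : ℕ} [NeZero n] (hqn : (q : ZMod n) ^ n = 1)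
    (hq : (q : ZMod n) ≠ 1) : ¬ ∀ a b : Gf n q, a * b = b * a := by
  intro hcomm
  set v := Units.ofPowEqOne _ n hqn (NeZero.ne n)
  have hv : v • (1 : ZMod n) = q := by
    rw [Units.smul_def, smul_eq_mul, mul_one, Units.val_ofPowEqOne]
  let a := MulAction.toPermHom (ZMod n)ˣ (ZMod n) v⁻¹
  let b := Equiv.addRight (1 : ZMod n)
  have ha : a ^ n = 1 := by rw [← map_pow, inv_pow, Units.pow_ofPowEqOne, inv_one, map_one]
  have hb : b ^ n = 1 := by simp [b]
  have hab : a⁻¹ * b * a = b ^ q := Equiv.ext fun x => by simp [a, b, smul_add, hv]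
  have hba : a * b = b * a := by
    simpa using congrArg (lift a b ha hb hab) (hcomm (gGen n q) (hGen n q))
  have hbq : b ^ q = b := by rw [← hab, mul_assoc, ← hba, inv_mul_cancel_left]
  exact hq (by simpa [b] using congrArg (· 0) hbq)

end Gf

theorem stmt16_general (p e : ℕ) (hp : p.Prime)
    (f₁ f₂ : ℕ) (h12 : f₁ < f₂) (hf2 : f₂ ≤ e)
    (n : ℕ) (hn : n = p ^ e) :
    IsEmpty (Gf n (1 + p ^ f₁) ≃* Gf n (1 + p ^ f₂)) ∧
    Nonempty (Gf n (1 + p ^ e) ≃* Multiplicative (ZMod n) × Multiplicative (ZMod n)) ∧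
    (∀ f : ℕ, 1 ≤ f → f < e → ¬ ∀ a b : Gf n (1 + p ^ f), a * b = b * a) := by
  subst hn
  have pow_dvd_pow_iff {a b : ℕ} : p ^ a ∣ p ^ b ↔ a ≤ b :=
    Nat.pow_dvd_pow_iff_le_right hp.one_lt
  have (f : ℕ) : NeZero (p ^ f) := ⟨pow_ne_zero f hp.ne_zero⟩
  refine ⟨?_, ⟨Gf.mulEquivProdOfDvd dvd_rfl⟩, fun f hf hfe => ?_⟩
  · exact Gf.isEmpty_mulEquiv (pow_dvd_pow_iff.2 hf2) (by rw [pow_dvd_pow_iff]; omega) dvd_rfl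
  · refine Gf.not_commutative ?_ ?_ <;> push_cast
    · exact ZMod.one_add_pow_eq_one_of_dvd (dvd_pow_self _ (by omega))
    · rw [ne_eq, add_eq_left, ← Nat.cast_pow, ZMod.natCast_eq_zero_iff, pow_dvd_pow_iff]
      omega

theorem stmt16 (p e : ℕ) (hp : p.Prime) (hodd : Odd p) (he : 1 ≤ e)
    (f₁ f₂ : ℕ) (hf1 : 1 ≤ f₁) (h12 : f₁ < f₂) (hf2 : f₂ ≤ e)
    (n : ℕ) (hn : n = p ^ e) :
    IsEmpty (Gf n (1 + p ^ f₁) ≃* Gf n (1 + p ^ f₂)) ∧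
    Nonempty (Gf n (1 + p ^ e) ≃* Multiplicative (ZMod n) × Multiplicative (ZMod n)) ∧
    (∀ f : ℕ, 1 ≤ f → f < e → ¬ ∀ a b : Gf n (1 + p ^ f), a * b = b * a) :=
  stmt16_general p e hp f₁ f₂ h12 hf2 n hn
end
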